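/- arXiv:1911.11973 — 3 statements merged into one kernel-verified Lean document; each statement's English description precedes it below -/
import Mathlib

section
/- Let φ = (1+√5)/2 and frac(x) = x − ⌊x⌋. There exists a constant C > 0 such that for all real numbers D and Δ with 0 < Δ ≤ D and every point p ∈ ℝ² with ‖p‖ = D, there exists a natural number k with k ≤ C·D/Δ such that the ray from the origin at angle 2π·frac(k·φ) intersects the closed ball of radius Δ/2 centered at p. -/
/-- The unit vector of `ℝ²` in direction `α`. -/
noncomputable def rayDir (α : ℝ) : EuclideanSpace ℝ (Fin 2) :=
  (EuclideanSpace.equiv (Fin 2) ℝ).symm ![Real.cos α, Real.sin α]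

/-!
Let `q = F (n + 1)` and `P = F (n + 2)` be consecutive Fibonacci numbers. Binet's formula gives
`q φ = P - ψ ^ (n + 1)`, so `k φ` differs from `k P / q` by `k ψ ^ (n + 1) / q`, which is at most
`1 / q` in size for `k < q` because `q |ψ| ^ (n + 1) ≤ |φ ψ| ^ n = 1`. As `P` is invertible modulo `q`,
the fractions `k P / q` with `k < q` run through all multiples of `1 / q` modulo one, so every
`x` lies within `2 / q` of some `k φ` modulo one. Taking `q` between `N` and `2 N` (consecutive
Fibonacci numbers differ by a factor at most two) and `N ≈ D / Δ`, the spoke `k` makes an angle at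
most `Δ / (2 D)` with `p`, and at distance `D` the chord is shorter than this arc.
-/

open Real
open scoped goldenRatio

lemma Nat.exists_lt_mul_sub_eq_mul {a q : ℕ} (hq : q ≠ 0) (h : a.Coprime q) (j : ℤ) :
    ∃ k < q, ∃ r : ℤ, (k * a : ℤ) - j = q * r := by
  have : NeZero q := ⟨hq⟩
  let u := ZMod.unitOfCoprime a h
  refine ⟨((j : ZMod q) * ↑u⁻¹).val, ZMod.val_lt _, ?_⟩
  rw [← dvd_def, ← ZMod.intCast_zmod_eq_zero_iff_dvd]
  push_cast
  rw [ZMod.natCast_val, ZMod.cast_id, mul_assoc, show (a : ZMod q) = u from rfl, Units.inv_mul,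
    mul_one, sub_self]

lemma fib_succ_le_goldenRatio_pow (n : ℕ) : (Nat.fib (n + 1) : ℝ) ≤ φ ^ n := by
  have : φ * Nat.fib (n + 1) ≤ φ * φ ^ n := by
    rw [← pow_succ', ← goldenRatio_mul_fib_succ_add_fib]
    exact le_add_of_nonneg_right (Nat.cast_nonneg _)
  exact le_of_mul_le_mul_left this goldenRatio_pos

lemma fib_succ_mul_abs_goldenConj_pow_succ_le_one (n : ℕ) :
    (Nat.fib (n + 1) : ℝ) * |ψ| ^ (n + 1) ≤ 1 := by
  have habs : |ψ| < 1 := abs_lt.2 ⟨neg_one_lt_goldenConj, goldenConj_neg.trans one_pos⟩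
  calc (Nat.fib (n + 1) : ℝ) * |ψ| ^ (n + 1) ≤ φ ^ n * |ψ| ^ (n + 1) := by
        gcongr; exact fib_succ_le_goldenRatio_pow n
    _ = |φ * ψ| ^ n * |ψ| := by rw [abs_mul, mul_pow, abs_of_pos goldenRatio_pos]; ring
    _ ≤ 1 := by rw [goldenRatio_mul_goldenConj]; simpa using habs.le

lemma exists_lt_fib_abs_nat_mul_goldenRatio_sub_le (x : ℝ) (n : ℕ) :
    ∃ k < Nat.fib (n + 1), ∃ m : ℤ, |k * φ - m - x| ≤ 2 / Nat.fib (n + 1) := by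
  set q := Nat.fib (n + 1)
  have hq : (0 : ℝ) < q := by simp [q]
  obtain ⟨k, hk, m, hkm⟩ := Nat.exists_lt_mul_sub_eq_mul (Nat.fib_pos.2 n.succ_pos).ne'
    (Nat.fib_coprime_fib_succ (n + 1)).symm ⌊x * q⌋
  refine ⟨k, hk, m, ?_⟩
  have hfib : (Nat.fib (n + 2) : ℝ) - φ * q = ψ ^ (n + 1) :=
    fib_succ_sub_goldenRatio_mul_fib (n + 1)
  have hkmR : (k : ℝ) * Nat.fib (n + 2) - ⌊x * q⌋ = q * m := by exact_mod_cast hkm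
  have hsplit : k * φ - m - x = ((⌊x * q⌋ - x * q) - k * ψ ^ (n + 1)) / q := by
    rw [eq_div_iff hq.ne']
    linear_combination hkmR - k * hfib
  have hfloor : |⌊x * q⌋ - x * q| ≤ 1 := by
    rw [abs_sub_comm, Int.self_sub_floor, abs_of_nonneg (Int.fract_nonneg _)]
    exact (Int.fract_lt_one _).le
  have herr : |k * ψ ^ (n + 1)| ≤ 1 := by
    rw [abs_mul, abs_pow, Nat.abs_cast]
    calc (k : ℝ) * |ψ| ^ (n + 1) ≤ q * |ψ| ^ (n + 1) := by gcongr
      _ ≤ 1 := fib_succ_mul_abs_goldenConj_pow_succ_le_one n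
  rw [hsplit, abs_div, abs_of_pos hq]
  gcongr
  linarith [abs_sub (⌊x * q⌋ - x * q) (k * ψ ^ (n + 1))]

lemma exists_fib_mem_Ico {R : ℝ} (hR : 1 ≤ R) :
    ∃ n, R ≤ Nat.fib (n + 1) ∧ (Nat.fib (n + 1) : ℝ) < 2 * R := by
  have hex : ∃ n, R ≤ Nat.fib (n + 1) := by
    obtain ⟨n, hn⟩ := ((Nat.fib_add_two_strictMono.tendsto_atTop).eventually_ge_atTop ⌈R⌉₊).exists
    exact ⟨n + 1, (Nat.le_ceil R).trans (by exact_mod_cast hn)⟩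
  classical
  refine ⟨Nat.find hex, Nat.find_spec hex, ?_⟩
  rcases h : Nat.find hex with _ | n
  · simp only [zero_add, Nat.fib_one, Nat.cast_one]; linarith
  · have hlt : (Nat.fib (n + 1) : ℝ) < R := not_le.1 (Nat.find_min hex (by omega))
    have hmono : (Nat.fib n : ℝ) ≤ Nat.fib (n + 1) := by exact_mod_cast Nat.fib_le_fib_succ
    rw [Nat.fib_add_two, Nat.cast_add]
    linarith

lemma exists_nat_lt_abs_nat_mul_goldenRatio_sub_le (x : ℝ) {N : ℝ} (hN : 1 ≤ N) :
    ∃ k : ℕ, (k : ℝ) < 2 * N ∧ ∃ m : ℤ, |k * φ - m - x| ≤ 2 / N := by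
  obtain ⟨n, hNq, hq2N⟩ := exists_fib_mem_Ico hN
  obtain ⟨k, hk, m, hkm⟩ := exists_lt_fib_abs_nat_mul_goldenRatio_sub_le x n
  refine ⟨k, lt_trans (by exact_mod_cast hk) hq2N, m, hkm.trans ?_⟩
  gcongr

lemma rayDir_eq_repr_exp (α : ℝ) :
    rayDir α = Complex.orthonormalBasisOneI.repr (Complex.exp (α * Complex.I)) := by
  ext i
  fin_cases i <;> simp [rayDir, Complex.exp_ofReal_mul_I_re, Complex.exp_ofReal_mul_I_im]

lemma rayDir_periodic : Function.Periodic rayDir (2 * π) := fun α => by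
  simp [rayDir, Real.cos_add_two_pi, Real.sin_add_two_pi]

lemma norm_rayDir_sub_rayDir_le (α β : ℝ) : ‖rayDir α - rayDir β‖ ≤ |α - β| := by
  rw [rayDir_eq_repr_exp, rayDir_eq_repr_exp, ← map_sub, LinearIsometryEquiv.norm_map]
  have : Complex.exp (α * Complex.I) - Complex.exp (β * Complex.I)
      = Complex.exp (β * Complex.I) * (Complex.exp (Complex.I * ↑(α - β)) - 1) := by
    rw [mul_sub, ← Complex.exp_add]; push_cast; ring_nf
  rw [this, norm_mul, Complex.norm_exp_ofReal_mul_I, one_mul]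
  simpa using norm_exp_I_mul_ofReal_sub_one_le (x := α - β)

lemma exists_eq_norm_smul_rayDir (p : EuclideanSpace ℝ (Fin 2)) : ∃ θ, p = ‖p‖ • rayDir θ := by
  set z := Complex.orthonormalBasisOneI.repr.symm p
  refine ⟨Complex.arg z, ?_⟩
  have hz : ‖z‖ = ‖p‖ := LinearIsometryEquiv.norm_map _ p
  rw [← hz, rayDir_eq_repr_exp, ← map_smul, Complex.real_smul, Complex.norm_mul_exp_arg_mul_I]
  exact (LinearIsometryEquiv.apply_symm_apply _ p).symm

lemma rayDir_two_pi_mul_fract (y : ℝ) (m : ℤ) :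
    rayDir (2 * π * Int.fract y) = rayDir (2 * π * (y - m)) := by
  rw [Int.fract, mul_sub, mul_sub, mul_comm (2 * π) (⌊y⌋ : ℝ), mul_comm (2 * π) (m : ℝ),
    rayDir_periodic.sub_int_mul_eq, rayDir_periodic.sub_int_mul_eq]

/-- There is a constant `C > 0` such that for all `0 < Δ ≤ D` and every point
`p` with `‖p‖ = D`, some golden-angle spoke of index `k ≤ C * D / Δ` (the ray from the
origin at angle `2π · frac (k φ)`) intersects the closed ball of radius `Δ/2` around `p`. -/
theorem goldenFA_discovery :
    ∃ C : ℝ, 0 < C ∧ ∀ D Δ : ℝ, 0 < Δ → Δ ≤ D →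
      ∀ p : EuclideanSpace ℝ (Fin 2), ‖p‖ = D →
        ∃ k : ℕ, (k : ℝ) ≤ C * D / Δ ∧
          ∃ t : ℝ, 0 ≤ t ∧
            t • rayDir (2 * Real.pi * Int.fract ((k : ℝ) * ((1 + Real.sqrt 5) / 2)))
              ∈ Metric.closedBall p (Δ / 2) := by
  refine ⟨16 * π, by positivity, fun D Δ hΔ hΔD p hp => ?_⟩
  have hD : 0 < D := hΔ.trans_le hΔD
  obtain ⟨θ, hθ⟩ := exists_eq_norm_smul_rayDir p
  have hN : 1 ≤ 8 * π * D / Δ := by rw [one_le_div hΔ]; nlinarith [pi_gt_three]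
  obtain ⟨k, hk, m, hkm⟩ := exists_nat_lt_abs_nat_mul_goldenRatio_sub_le (θ / (2 * π)) hN
  refine ⟨k, hk.le.trans_eq (by ring), D, hD.le, ?_⟩
  have hangle : |2 * π * (k * φ - m) - θ| ≤ Δ / (2 * D) := by
    have : 2 * π * (k * φ - m) - θ = 2 * π * (k * φ - m - θ / (2 * π)) := by field_simp
    rw [this, abs_mul, abs_of_pos two_pi_pos]
    calc _ ≤ 2 * π * (2 / (8 * π * D / Δ)) := by gcongr
      _ = Δ / (2 * D) := by field_simp; ring
  rw [show (1 + √5) / 2 = φ from rfl, Metric.mem_closedBall, hθ, hp, dist_eq_norm, ← smul_sub,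
    norm_smul, Real.norm_of_nonneg hD.le, rayDir_two_pi_mul_fract _ m]
  calc D * ‖rayDir (2 * π * (k * φ - m)) - rayDir θ‖ ≤ D * (Δ / (2 * D)) := by
        gcongr; exact (norm_rayDir_sub_rayDir_le _ _).trans hangle
    _ = Δ / 2 := by field_simp
end

section
/- For all reals D and Δ with 0 < Δ < D and every natural number n with n < π/arcsin(Δ/(2D)), for any choice of n rays from the origin in ℝ² there exists a point p ∈ ℝ² with ‖p‖ = D such that none of the n rays intersects the closed ball of radius Δ/2 centered at p. Consequently, Ω(D/Δ) spokes from the nest are necessary to guarantee discovery of a cluster of diameter Δ at distance D. -/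
open Real InnerProductGeometry MeasureTheory

theorem AddCircle.exists_forall_lt_norm_sub {T : ℝ} [Fact (0 < T)] {ι : Type*} [Fintype ι]
    (a : ι → AddCircle T) {ε : ℝ} (h : Fintype.card ι * (2 * ε) < T) :
    ∃ x : AddCircle T, ∀ i, ε < ‖x - a i‖ := by
  have hcover : volume (⋃ i, Metric.closedBall (a i) ε) <
      volume (Set.univ : Set (AddCircle T)) := by
    rw [AddCircle.measure_univ]
    calc volume (⋃ i, Metric.closedBall (a i) ε)
        ≤ ∑ i, volume (Metric.closedBall (a i) ε) :=
          measure_iUnion_fintype_le _ _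
      _ ≤ ∑ _i : ι, ENNReal.ofReal (2 * ε) := by
          simp only [AddCircle.volume_closedBall]
          gcongr
          exact min_le_right _ _
      _ = ENNReal.ofReal (Fintype.card ι * (2 * ε)) := by
          rw [Finset.sum_const, Finset.card_univ, nsmul_eq_mul,
            ENNReal.ofReal_mul (Nat.cast_nonneg _), ENNReal.ofReal_natCast]
      _ < ENNReal.ofReal T := (ENNReal.ofReal_lt_ofReal_iff Fact.out).2 h
  obtain ⟨x, hx⟩ := (Set.ne_univ_iff_exists_notMem _).1 (ne_of_apply_ne _ hcover.ne)
  refine ⟨x, fun i => ?_⟩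
  simp only [Set.mem_iUnion, not_exists, Metric.mem_closedBall, not_le, dist_eq_norm] at hx
  exact hx i

theorem arccos_cos_eq_norm_coe_addCircle (x : ℝ) :
    arccos (cos x) = ‖(x : AddCircle (2 * π))‖ := by
  have h2π : (2 * π) ≠ 0 := by positivity
  have hhalf := AddCircle.norm_le_half_period (2 * π) (x := (x : AddCircle (2 * π))) h2π
  rw [AddCircle.norm_eq] at hhalf ⊢
  rw [abs_of_pos two_pi_pos, mul_div_cancel_left₀ _ two_ne_zero] at hhalf
  rw [← cos_sub_int_mul_two_pi x (round ((2 * π)⁻¹ * x)), ← cos_abs]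
  exact arccos_cos (abs_nonneg _) hhalf

theorem norm_rayDir (α : ℝ) : ‖rayDir α‖ = 1 := by
  simp [rayDir, EuclideanSpace.norm_eq, Fin.sum_univ_two]

theorem inner_rayDir (a b : ℝ) : inner ℝ (rayDir a) (rayDir b) = cos (b - a) := by
  simp [rayDir, PiLp.inner_apply, Fin.sum_univ_two, cos_sub, mul_comm]

theorem angle_rayDir (a b : ℝ) :
    angle (rayDir a) (rayDir b) = ‖(b : AddCircle (2 * π)) - a‖ := by
  rw [angle, inner_rayDir, norm_rayDir, norm_rayDir, mul_one, div_one,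
    arccos_cos_eq_norm_coe_addCircle, AddCircle.coe_sub]

theorem angle_le_arcsin_of_norm_smul_sub_le {V : Type*} [NormedAddCommGroup V]
    [InnerProductSpace ℝ V] {u p : V} {t r : ℝ} (ht : 0 ≤ t) (h : ‖t • u - p‖ ≤ r)
    (hr : r < ‖p‖) : angle u p ≤ arcsin (r / ‖p‖) := by
  have ht : 0 < t := by
    refine ht.lt_of_ne fun ht0 => ?_
    rw [← ht0, zero_smul, zero_sub, norm_neg] at h
    linarith
  rw [← angle_smul_left_of_pos u p ht]
  set θ := angle (t • u) p
  set a := ‖t • u‖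
  set b := ‖p‖
  have hr0 : 0 ≤ r := (norm_nonneg _).trans h
  have hb : 0 < b := hr0.trans_lt hr
  have hcosine : ‖t • u - p‖ ^ 2 = a ^ 2 + b ^ 2 - 2 * a * b * cos θ := by
    simpa only [sq] using
      norm_sub_sq_eq_norm_sq_add_norm_sq_sub_two_mul_norm_mul_norm_mul_cos_angle (t • u) p
  have hdist : a ^ 2 + b ^ 2 - 2 * a * b * cos θ ≤ r ^ 2 := by
    rw [← hcosine]; gcongr
  have hcos : 0 < cos θ := by
    by_contra! hcos
    nlinarith [mul_nonneg (mul_nonneg (norm_nonneg (t • u)) hb.le) (neg_nonneg.2 hcos)]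
  -- `‖t • u - p‖² = (a - b cos θ)² + (b sin θ)²`
  have hsin : b * sin θ ≤ r := by
    have hsq : (b * sin θ) ^ 2 ≤ r ^ 2 := by
      nlinarith [sin_sq_add_cos_sq θ, sq_nonneg (a - b * cos θ)]
    exact abs_le_of_sq_le_sq' hsq hr0 |>.2
  have hacute : θ < π / 2 := by
    by_contra! hθ
    have hθπ : θ ≤ π + π / 2 := by linarith [angle_le_pi (t • u) p, pi_pos]
    exact (cos_nonpos_of_pi_div_two_le_of_le hθ hθπ).not_gt hcos
  rw [le_arcsin_iff_sin_le' ⟨by linarith [angle_nonneg (t • u) p, pi_pos], hacute.le⟩,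
    le_div_iff₀ hb, mul_comm]
  exact hsin

/-- lower bound: For all `0 < Δ < D` and every family of
`n < π / arcsin (Δ/(2D))` rays from the origin, there is a point `p` with `‖p‖ = D` such
that no ray of the family intersects the closed ball of radius `Δ/2` around `p`.
Hence `Ω(D/Δ)` spokes are necessary. -/
theorem spoke_lower_bound (D Δ : ℝ) (hΔ : 0 < Δ) (hΔD : Δ < D)
    (n : ℕ) (hn : (n : ℝ) < Real.pi / Real.arcsin (Δ / (2 * D)))
    (α : Fin n → ℝ) :
    ∃ p : EuclideanSpace ℝ (Fin 2), ‖p‖ = D ∧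
      ∀ i : Fin n, ¬ ∃ t : ℝ, 0 ≤ t ∧ t • rayDir (α i) ∈ Metric.closedBall p (Δ / 2) := by
  have hD : 0 < D := hΔ.trans hΔD
  set ε := arcsin (Δ / (2 * D))
  have hε : 0 < ε := arcsin_pos.2 (by positivity)
  have harcs : (Fintype.card (Fin n) : ℝ) * (2 * ε) < 2 * π := by
    rw [Fintype.card_fin]; rw [lt_div_iff₀ hε] at hn; linarith
  have : Fact (0 < 2 * π) := ⟨two_pi_pos⟩
  obtain ⟨θ, hθ⟩ :=
    AddCircle.exists_forall_lt_norm_sub (fun i => ((α i : ℝ) : AddCircle (2 * π))) harcs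
  obtain ⟨θ, rfl⟩ := QuotientAddGroup.mk_surjective θ
  have hp : ‖D • rayDir θ‖ = D := by rw [norm_smul, norm_rayDir, norm_of_nonneg hD.le, mul_one]
  refine ⟨D • rayDir θ, hp, fun i ⟨t, ht, hmem⟩ => (hθ i).not_ge ?_⟩
  rw [mem_closedBall_iff_norm] at hmem
  have := angle_le_arcsin_of_norm_smul_sub_le ht hmem (by rw [hp]; linarith)
  rwa [angle_smul_right_of_pos _ _ hD, angle_rayDir, hp, div_div] at this
end

section
/- There exists a constant c > 0 such that for every sufficiently large natural number n, if X₁, …, Xₙ are independent random variables each uniformly distributed on [0,1), then with probability at least 1/2 there exists an arc of length c·(log n)/n of the circle ℝ/ℤ containing none of the points Xᵢ (mod 1). -/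
/-!
Place `m = ⌈q⁻¹⌉` arcs of length `ε` at the points `2jε`, where `q = (1 - ε)ⁿ`. Each arc is
missed by all `n` points with probability `q`, and two of them with probability
`(1 - 2ε)ⁿ ≤ q²`, so the second Bonferroni inequality bounds the probability that some arc is
missed from below by `mq - m(m-1)q²/2 ≥ 1/2`. For `ε = log n / (8n)` one has `q ≥ n^(-1/4)`,
which leaves room for all `m` arcs on the circle.
-/

open MeasureTheory ProbabilityTheory

open Finset in
theorem sum_measure_le_measure_biUnion_add_sum_inter {Ω : Type*} [MeasurableSpace Ω]
    (μ : Measure Ω) {B : ℕ → Set Ω} (hB : ∀ j, MeasurableSet (B j)) (m : ℕ) :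
    ∑ j ∈ range m, μ (B j) ≤
      μ (⋃ j ∈ range m, B j) + ∑ j ∈ range m, ∑ k ∈ range j, μ (B j ∩ B k) := by
  induction m with
  | zero => simp
  | succ m ih =>
    set U := ⋃ j ∈ range m, B j
    have hU : MeasurableSet U := .biUnion (range m).countable_toSet fun j _ => hB j
    have hinter : μ (B m ∩ U) ≤ ∑ k ∈ range m, μ (B m ∩ B k) := by
      rw [Set.inter_iUnion₂]
      exact measure_biUnion_finset_le _ _
    have hunion : ⋃ j ∈ range (m + 1), B j = B m ∪ U := by
      rw [range_add_one, set_biUnion_insert]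
    rw [hunion, sum_range_succ, sum_range_succ]
    calc ∑ j ∈ range m, μ (B j) + μ (B m)
        ≤ μ U + ∑ j ∈ range m, ∑ k ∈ range j, μ (B j ∩ B k) + μ (B m) := by gcongr
      _ = (μ (B m ∪ U) + μ (B m ∩ U)) + ∑ j ∈ range m, ∑ k ∈ range j, μ (B j ∩ B k) := by
        rw [measure_union_add_inter _ hU]; ring
      _ ≤ μ (B m ∪ U) + (∑ j ∈ range m, ∑ k ∈ range j, μ (B j ∩ B k) +
            ∑ k ∈ range m, μ (B m ∩ B k)) := by
        rw [add_assoc, add_comm (μ (B m ∩ U))]; gcongr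

theorem one_half_le_ceil_inv_mul_sub_choose_two_mul_sq {q : ℝ} (hq : 0 < q) :
    1 / 2 ≤ ⌈q⁻¹⌉₊ * q - (⌈q⁻¹⌉₊.choose 2 : ℕ) * q ^ 2 := by
  set x : ℝ := ⌈q⁻¹⌉₊ * q
  have hx1 : 1 ≤ x := by
    simpa [x, inv_mul_cancel₀ hq.ne'] using mul_le_mul_of_nonneg_right (Nat.le_ceil q⁻¹) hq.le
  have hx2 : x ≤ 1 + q := by
    have := mul_le_mul_of_nonneg_right (Nat.ceil_lt_add_one (inv_nonneg.2 hq.le)).le hq.le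
    rw [add_mul, inv_mul_cancel₀ hq.ne', one_mul] at this
    linarith
  -- in terms of `x = mq` the claim reads `0 ≤ (x - 1)(1 + q - x) + q`
  have key : ⌈q⁻¹⌉₊ * q - (⌈q⁻¹⌉₊.choose 2 : ℕ) * q ^ 2 = x - x ^ 2 / 2 + x * q / 2 := by
    rw [Nat.cast_choose_two]
    ring
  rw [key]
  nlinarith [mul_nonneg (sub_nonneg.2 hx1) (sub_nonneg.2 hx2)]

open Finset in
theorem one_half_le_measure_biUnion {Ω : Type*} [MeasurableSpace Ω] {μ : Measure Ω}
    {B : ℕ → Set Ω} (hB : ∀ j, MeasurableSet (B j)) {q : ℝ} (hq : 0 < q)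
    (hB₁ : ∀ j < ⌈q⁻¹⌉₊, μ (B j) = ENNReal.ofReal q)
    (hB₂ : ∀ j < ⌈q⁻¹⌉₊, ∀ k < j, μ (B j ∩ B k) ≤ ENNReal.ofReal (q ^ 2)) :
    1 / 2 ≤ μ (⋃ j ∈ range ⌈q⁻¹⌉₊, B j) := by
  set m := ⌈q⁻¹⌉₊
  have hsum : ∑ j ∈ range m, μ (B j) = ENNReal.ofReal (m * q) := by
    rw [sum_congr rfl fun j hj => hB₁ j (mem_range.1 hj), sum_const, card_range,
      ← ENNReal.ofReal_nsmul, nsmul_eq_mul]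
  have hpairs : ∑ j ∈ range m, ∑ k ∈ range j, μ (B j ∩ B k) ≤
      ENNReal.ofReal ((m.choose 2 : ℕ) * q ^ 2) := by
    calc ∑ j ∈ range m, ∑ k ∈ range j, μ (B j ∩ B k)
        ≤ ∑ j ∈ range m, ∑ k ∈ range j, ENNReal.ofReal (q ^ 2) :=
          sum_le_sum fun j hj => sum_le_sum fun k hk =>
            hB₂ j (mem_range.1 hj) k (mem_range.1 hk)
      _ = ENNReal.ofReal ((m.choose 2 : ℕ) * q ^ 2) := by
        simp only [sum_const, card_range, nsmul_eq_mul]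
        rw [← sum_mul, ← Nat.cast_sum, sum_range_id, ← Nat.choose_two_right,
          ENNReal.ofReal_mul (Nat.cast_nonneg _), ENNReal.ofReal_natCast]
  calc (1 / 2 : ENNReal) = ENNReal.ofReal (1 / 2) := by
        rw [ENNReal.ofReal_div_of_pos two_pos, ENNReal.ofReal_one, ENNReal.ofReal_ofNat]
    _ ≤ ENNReal.ofReal (m * q) - ENNReal.ofReal ((m.choose 2 : ℕ) * q ^ 2) := by
      rw [← ENNReal.ofReal_sub _ (by positivity)]
      exact ENNReal.ofReal_le_ofReal (one_half_le_ceil_inv_mul_sub_choose_two_mul_sq hq)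
    _ ≤ μ (⋃ j ∈ range m, B j) := by
      rw [tsub_le_iff_right, ← hsum]
      exact (sum_measure_le_measure_biUnion_add_sum_inter μ hB m).trans (by gcongr)

def circleArc (a ε : ℝ) : Set ℝ := {x | Int.fract (x - a) ≤ ε}

theorem measurableSet_circleArc (a ε : ℝ) : MeasurableSet (circleArc a ε) :=
  measurableSet_le (measurable_fract.comp (measurable_id.sub_const a)) measurable_const

theorem circleArc_inter_Ico {a ε : ℝ} (ha : 0 ≤ a) (hε : 0 ≤ ε) (h : a + ε < 1) :
    circleArc a ε ∩ Set.Ico 0 1 = Set.Icc a (a + ε) := by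
  ext x
  simp only [circleArc, Set.mem_inter_iff, Set.mem_ofPred_eq, Set.mem_Ico, Set.mem_Icc]
  constructor
  · rintro ⟨hfract, hx0, hx1⟩
    rcases le_or_gt a x with hax | hxa
    · rw [Int.fract_eq_self.2 ⟨by linarith, by linarith⟩] at hfract
      exact ⟨hax, by linarith⟩
    · rw [← Int.fract_add_one, Int.fract_eq_self.2 ⟨by linarith, by linarith⟩] at hfract
      linarith
  · rintro ⟨hax, hxa⟩
    rw [Int.fract_eq_self.2 ⟨by linarith, by linarith⟩]
    exact ⟨by linarith, by linarith, by linarith⟩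

instance isProbabilityMeasure_volume_restrict_Ico : IsProbabilityMeasure (volume.restrict (Set.Ico (0 : ℝ) 1)) :=
  ⟨by simp⟩

theorem volume_restrict_Ico_circleArc {a ε : ℝ} (ha : 0 ≤ a) (hε : 0 ≤ ε) (h : a + ε < 1) :
    volume.restrict (Set.Ico 0 1) (circleArc a ε) = ENNReal.ofReal ε := by
  rw [Measure.restrict_apply (measurableSet_circleArc a ε), circleArc_inter_Ico ha hε h,
    Real.volume_Icc, add_sub_cancel_left]

theorem volume_restrict_Ico_circleArc_union {a b ε : ℝ} (ha : 0 ≤ a) (hε : 0 ≤ ε)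
    (hab : a + ε < b) (hb : b + ε < 1) :
    volume.restrict (Set.Ico 0 1) (circleArc a ε ∪ circleArc b ε) = ENNReal.ofReal (2 * ε) := by
  have hdisj : Disjoint (Set.Icc a (a + ε)) (Set.Icc b (b + ε)) :=
    Set.disjoint_left.2 fun x hxa hxb => by linarith [hxa.2, hxb.1]
  rw [Measure.restrict_apply ((measurableSet_circleArc a ε).union (measurableSet_circleArc b ε)),
    Set.union_inter_distrib_right, circleArc_inter_Ico ha hε (by linarith),
    circleArc_inter_Ico (by linarith) hε hb, measure_union hdisj measurableSet_Icc,
    Real.volume_Icc, Real.volume_Icc, add_sub_cancel_left, add_sub_cancel_left,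
    ← ENNReal.ofReal_add hε hε, two_mul]

theorem iIndepFun.measure_iInter_preimage_eq_pow {Ω β ι : Type*} [MeasurableSpace Ω]
    [MeasurableSpace β] [Fintype ι] {μ : Measure Ω} {ν : Measure β} {X : ι → Ω → β}
    (hX : ∀ i, AEMeasurable (X i) μ) (hind : iIndepFun X μ) (hmap : ∀ i, μ.map (X i) = ν)
    {C : Set β} (hC : MeasurableSet C) :
    μ (⋂ i, X i ⁻¹' C) = ν C ^ Fintype.card ι := by
  rw [hind.meas_iInter fun i => ⟨C, hC, rfl⟩, ← Finset.card_univ, ← Finset.prod_const]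
  refine Finset.prod_congr rfl fun i _ => ?_
  rw [← hmap i, Measure.map_apply_of_aemeasurable (hX i) hC]

theorem one_half_le_measure_exists_forall_notMem_circleArc {Ω : Type*} [MeasurableSpace Ω]
    {μ : Measure Ω} {n : ℕ} {X : Fin n → Ω → ℝ} (hX : ∀ i, Measurable (X i))
    (hind : iIndepFun X μ) (hmap : ∀ i, μ.map (X i) = volume.restrict (Set.Ico 0 1))
    {ε : ℝ} (hε : 0 < ε) (hε₁ : ε < 1) (hfit : 2 * ⌈((1 - ε) ^ n)⁻¹⌉₊ * ε ≤ 1) :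
    1 / 2 ≤ μ {ω | ∃ a, ∀ i, X i ω ∉ circleArc a ε} := by
  set q := (1 - ε) ^ n
  have hq : 0 < q := pow_pos (by linarith) n
  have hm : (1 : ℝ) ≤ ⌈q⁻¹⌉₊ := by exact_mod_cast Nat.one_le_ceil_iff.2 (inv_pos.2 hq)
  have hε₂ : 2 * ε ≤ 1 := by nlinarith
  have hfits : ∀ j < ⌈q⁻¹⌉₊, 2 * j * ε + ε < 1 := fun j hj => by
    have : (j : ℝ) + 1 ≤ ⌈q⁻¹⌉₊ := by exact_mod_cast hj
    nlinarith
  set A : ℕ → Set ℝ := fun j => circleArc (2 * j * ε) ε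
  set B : ℕ → Set Ω := fun j => ⋂ i, X i ⁻¹' (A j)ᶜ
  have hA : ∀ j, MeasurableSet (A j) := fun j => measurableSet_circleArc _ _
  have hprob : ∀ {C : Set ℝ}, MeasurableSet C →
      μ (⋂ i, X i ⁻¹' C) = volume.restrict (Set.Ico 0 1) C ^ n := fun hC => by
    simpa using iIndepFun.measure_iInter_preimage_eq_pow (fun i => (hX i).aemeasurable)
      hind hmap hC
  refine le_trans (one_half_le_measure_biUnion (B := B)
    (fun j => .iInter fun i => hX i (hA j).compl) hq (fun j hj => ?_) (fun j hj k hkj => ?_))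
    (measure_mono ?_)
  · rw [hprob (hA j).compl, prob_compl_eq_one_sub (hA j),
      volume_restrict_Ico_circleArc (by positivity) hε.le (hfits j hj),
      ← ENNReal.ofReal_one, ← ENNReal.ofReal_sub _ hε.le, ENNReal.ofReal_pow (by linarith)]
  · have hBB : B j ∩ B k = ⋂ i, X i ⁻¹' (A k ∪ A j)ᶜ := by
      ext ω
      simp only [B, Set.mem_inter_iff, Set.mem_iInter, Set.mem_preimage, Set.compl_union]
      exact ⟨fun h i => ⟨h.2 i, h.1 i⟩, fun h => ⟨fun i => (h i).2, fun i => (h i).1⟩⟩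
    have hkj' : (k : ℝ) + 1 ≤ j := by exact_mod_cast hkj
    rw [hBB, hprob ((hA k).union (hA j)).compl, prob_compl_eq_one_sub ((hA k).union (hA j)),
      volume_restrict_Ico_circleArc_union (by positivity) hε.le (by nlinarith) (hfits j hj),
      ← ENNReal.ofReal_one, ← ENNReal.ofReal_sub _ (by positivity),
      ← ENNReal.ofReal_pow (by linarith)]
    exact ENNReal.ofReal_le_ofReal <|
      (pow_le_pow_left₀ (by linarith) (by nlinarith) n).trans_eq (pow_right_comm _ _ _)
  · rintro ω hω
    obtain ⟨j, -, hj⟩ := Set.mem_iUnion₂.1 hω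
    exact ⟨2 * j * ε, Set.mem_iInter.1 hj⟩

theorem exp_neg_two_mul_le_one_sub {x : ℝ} (hx₀ : 0 ≤ x) (hx : x ≤ 1 / 2) :
    Real.exp (-(2 * x)) ≤ 1 - x := by
  have h₁ : 0 < 1 - x := by linarith
  calc Real.exp (-(2 * x)) ≤ Real.exp (1 - (1 - x)⁻¹) := by
        gcongr
        rw [le_sub_iff_add_le, ← le_sub_iff_add_le', inv_le_comm₀ h₁ (by linarith),
          inv_eq_one_div, div_le_iff₀ (by linarith)]
        nlinarith
    _ ≤ Real.exp (Real.log (1 - x)) := by gcongr; exact Real.one_sub_inv_le_log_of_pos h₁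
    _ = 1 - x := Real.exp_log h₁

theorem two_mul_ceil_inv_one_sub_pow_mul_le_one {n : ℕ} (hn : 2 ≤ n) :
    2 * ⌈((1 - 1 / 8 * Real.log n / n) ^ n)⁻¹⌉₊ * (1 / 8 * Real.log n / n) ≤ 1 := by
  set ε := 1 / 8 * Real.log n / n
  have hn' : (2 : ℝ) ≤ n := by exact_mod_cast hn
  have hlog : 0 < Real.log n := Real.log_pos (by linarith)
  have hε₀ : 0 ≤ ε := by positivity
  have hε : ε ≤ 1 / 2 := by
    rw [div_le_iff₀ (by positivity)]
    nlinarith [Real.log_le_self (n.cast_nonneg (α := ℝ))]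
  -- `(1 - ε)ⁿ ≥ exp (-2nε) = n ^ (-1/4)`
  have hq : ((1 - ε) ^ n)⁻¹ ≤ (n : ℝ) ^ (1 / 4 : ℝ) := by
    rw [Real.rpow_def_of_pos (by linarith), inv_le_comm₀ (pow_pos (by linarith) n) (by positivity),
      ← Real.exp_neg]
    calc Real.exp (-(Real.log n * (1 / 4))) = Real.exp (-(2 * ε)) ^ n := by
          rw [← Real.exp_nat_mul]; congr 1; simp only [ε]; field_simp; ring
      _ ≤ (1 - ε) ^ n := by gcongr; exact exp_neg_two_mul_le_one_sub hε₀ hε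
  have hr : (1 : ℝ) ≤ (n : ℝ) ^ (1 / 4 : ℝ) := Real.one_le_rpow (by linarith) (by norm_num)
  have hceil : (⌈((1 - ε) ^ n)⁻¹⌉₊ : ℝ) ≤ 2 * (n : ℝ) ^ (1 / 4 : ℝ) := by
    have := Nat.ceil_lt_add_one (R := ℝ) (by positivity : 0 ≤ (n : ℝ) ^ (1 / 4 : ℝ))
    have : (⌈((1 - ε) ^ n)⁻¹⌉₊ : ℝ) ≤ ⌈(n : ℝ) ^ (1 / 4 : ℝ)⌉₊ := by
      exact_mod_cast Nat.ceil_mono hq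
    linarith
  have hlog' : Real.log n ≤ (n : ℝ) ^ (3 / 4 : ℝ) / (3 / 4) :=
    Real.log_le_rpow_div (by positivity) (by norm_num)
  have hmul : (n : ℝ) ^ (1 / 4 : ℝ) * (n : ℝ) ^ (3 / 4 : ℝ) = n := by
    rw [← Real.rpow_add (by linarith)]; norm_num
  calc 2 * ⌈((1 - ε) ^ n)⁻¹⌉₊ * ε ≤ 2 * (2 * (n : ℝ) ^ (1 / 4 : ℝ)) * ε := by gcongr
    _ ≤ 1 := by
      simp only [ε]
      rw [← mul_div_assoc, div_le_one (by positivity)]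
      nlinarith

/-- There is a constant `c > 0` such that for every sufficiently large `n`,
if `X₁, …, Xₙ` are i.i.d. uniform on `[0,1)`, then with probability at least `1/2` some
arc of length `c log n / n` of the circle `ℝ/ℤ` (the arc of that length starting at some
`a`) contains none of the points `Xᵢ` (mod 1). -/
theorem uniform_points_max_gap_lower :
    ∃ c : ℝ, 0 < c ∧ ∃ n₀ : ℕ, ∀ n : ℕ, n₀ ≤ n →
      ∀ (Ω : Type) (_ : MeasureSpace Ω) (_ : IsProbabilityMeasure (volume : Measure Ω))
        (X : Fin n → Ω → ℝ),
        (∀ i, Measurable (X i)) →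
        iIndepFun (m := fun _ => Real.measurableSpace) X volume →
        (∀ i, Measure.map (X i) volume = volume.restrict (Set.Ico (0 : ℝ) 1)) →
        (1 / 2 : ENNReal) ≤
          volume {ω : Ω | ∃ a : ℝ, ∀ i : Fin n,
            ¬ Int.fract (X i ω - a) ≤ c * Real.log n / n} := by
  refine ⟨1 / 8, by norm_num, 2, fun n hn Ω _ _ X hX hind hmap => ?_⟩
  have hn' : (2 : ℝ) ≤ n := by exact_mod_cast hn
  have hlog : 0 < Real.log n := Real.log_pos (by linarith)
  have hε₁ : 1 / 8 * Real.log n / n < 1 := by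
    rw [div_lt_one (by positivity)]
    nlinarith [Real.log_le_self (n.cast_nonneg (α := ℝ))]
  exact one_half_le_measure_exists_forall_notMem_circleArc hX hind hmap (by positivity) hε₁
    (two_mul_ceil_inv_one_sub_pow_mul_le_one hn)
end
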